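/- (Lemma 1, within-environment alignment) Let X_i^b and X_j^b be independent random vectors, both with spurious-feature parameter p^b and the same class label y. Then the expected cosine similarity of their embeddings satisfies E[ ⟨W·X_i^b, W·X_j^b⟩ / (‖W·X_i^b‖·‖W·X_j^b‖) ] = (1 + D·(2p^b - 1)²)/(D+1). -/

import Mathlib

/-!
Since `Wᵀ W = 1`, the embedding `W` preserves dot products, so the cosine similarity of the
embeddings equals that of the raw vectors. Every raw vector `(y, ±y, …, ±y)` has squared norm
`D + 1`, and two of them have dot product `1 + ∑ᵢ sᵢ tᵢ`, where `sᵢ, tᵢ ∈ {±1}` record whether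
the `i`-th spurious coordinates agree with `y`. The pair `(Xi, Xj)` takes finitely many values,
so the expectation is a finite sum; under the product law the signs are independent with mean
`2p - 1`, whence `E[sᵢ tᵢ] = (2p - 1)²`.
-/

open Finset MeasureTheory
open scoped Matrix

section ProductWeights

variable {ι α R : Type*} [Fintype ι] [DecidableEq ι] [Fintype α] [CommSemiring R] {f : α → R}

theorem sum_prod_apply_eq_one (hf : ∑ a, f a = 1) :
    ∑ ε : ι → α, ∏ j, f (ε j) = 1 := by
  rw [← Fintype.prod_sum fun _ a => f a, hf, prod_const_one]

theorem sum_prod_apply_mul_apply (hf : ∑ a, f a = 1) (g : α → R) (i : ι) :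
    ∑ ε : ι → α, (∏ j, f (ε j)) * g (ε i) = ∑ a, f a * g a := by
  -- absorb `g (ε i)` into the `i`-th factor, then expand the product of sums
  have hfactor : ∀ ε : ι → α, (∏ j, f (ε j)) * g (ε i)
      = ∏ j, f (ε j) * (if j = i then g (ε j) else 1) := fun ε => by
    rw [prod_mul_distrib, Fintype.prod_ite_eq']
  simp_rw [hfactor]
  rw [← Fintype.prod_sum fun j a => f a * (if j = i then g a else 1),
    Fintype.prod_eq_single i fun j hj => by simp [hj, hf]]
  simp

end ProductWeights

section Bernoulli

def bernoulliMass (p : ℝ) (b : Bool) : ℝ := if b then p else 1 - p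

def spin (b : Bool) : ℝ := if b then 1 else -1

theorem bernoulliMass_nonneg {p : ℝ} (hp0 : 0 ≤ p) (hp1 : p ≤ 1) (b : Bool) :
    0 ≤ bernoulliMass p b := by
  cases b <;> simp [bernoulliMass] <;> linarith

theorem sum_bernoulliMass (p : ℝ) : ∑ b, bernoulliMass p b = 1 := by
  simp [bernoulliMass]

theorem sum_bernoulliMass_mul_spin (p : ℝ) : ∑ b, bernoulliMass p b * spin b = 2 * p - 1 := by
  simp [bernoulliMass, spin]
  ring

theorem spin_mul_self (b : Bool) : spin b * spin b = 1 := by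
  cases b <;> simp [spin]

theorem sum_sum_bernoulliMass_mul_one_add_sum_spin_mul_spin {ι : Type*} [Fintype ι]
    [DecidableEq ι] (p : ℝ) :
    ∑ ε : ι → Bool, ∑ δ : ι → Bool,
      (∏ j, bernoulliMass p (ε j)) * (∏ j, bernoulliMass p (δ j)) *
        (1 + ∑ i, spin (ε i) * spin (δ i)) = 1 + Fintype.card ι * (2 * p - 1) ^ 2 := by
  set w : (ι → Bool) → ℝ := fun ε => ∏ j, bernoulliMass p (ε j)
  have htotal : ∑ ε, w ε = 1 := sum_prod_apply_eq_one (sum_bernoulliMass p)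
  have hmean : ∀ i, ∑ ε, w ε * spin (ε i) = 2 * p - 1 := fun i =>
    (sum_prod_apply_mul_apply (sum_bernoulliMass p) spin i).trans (sum_bernoulliMass_mul_spin p)
  calc ∑ ε : ι → Bool, ∑ δ : ι → Bool, w ε * w δ * (1 + ∑ i, spin (ε i) * spin (δ i))
      = (∑ ε, w ε) * (∑ δ, w δ)
          + ∑ i, (∑ ε, w ε * spin (ε i)) * (∑ δ, w δ * spin (δ i)) := by
        simp_rw [Finset.sum_mul_sum, mul_add, mul_one, sum_add_distrib, Finset.mul_sum]
        congr 1
        conv_rhs => rw [Finset.sum_comm]; enter [2, ε]; rw [Finset.sum_comm]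
        exact sum_congr rfl fun _ _ => sum_congr rfl fun _ _ => sum_congr rfl fun _ _ => by ring
    _ = 1 + Fintype.card ι * (2 * p - 1) ^ 2 := by
        simp [htotal, hmean, sq]

end Bernoulli

section FiniteRange

variable {Ω E : Type*} [MeasurableSpace Ω] {μ : Measure Ω} [IsProbabilityMeasure μ]
  [MeasurableSpace E] [MeasurableSingletonClass E] {Z : Ω → E}

theorem integral_comp_eq_sum_of_sum_measure_preimage_eq_one (hZ : Measurable Z) (s : Finset E)
    (hs : ∑ b ∈ s, μ (Z ⁻¹' {b}) = 1) (g : E → ℝ) :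
    ∫ ω, g (Z ω) ∂μ = ∑ b ∈ s, μ.real (Z ⁻¹' {b}) * g b := by
  have hfiber : ∀ b, MeasurableSet (Z ⁻¹' {b}) := fun b => hZ (measurableSet_singleton b)
  have hae : ∀ᵐ ω ∂μ, Z ω ∈ s := by
    rw [sum_measure_preimage_singleton s fun b _ => hfiber b] at hs
    exact (ae_mem_iff_measure_eq (hZ s.measurableSet).nullMeasurableSet).2
      (hs.trans measure_univ.symm)
  calc ∫ ω, g (Z ω) ∂μ = ∫ ω, ∑ b ∈ s, (Z ⁻¹' {b}).indicator (fun _ => g b) ω ∂μ := by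
        refine integral_congr_ae ?_
        filter_upwards [hae] with ω hω
        rw [sum_eq_single_of_mem (f := fun b => (Z ⁻¹' {b}).indicator (fun _ => g b) ω) (Z ω) hω
          fun b _ hb => Set.indicator_of_notMem (Ne.symm hb) _]
        exact (Set.indicator_of_mem rfl _).symm
    _ = ∑ b ∈ s, μ.real (Z ⁻¹' {b}) * g b := by
        rw [integral_finsetSum _ fun b _ => (integrable_const _).indicator (hfiber b)]
        simp [integral_indicator_const _ (hfiber _)]

theorem integral_comp_eq_sum_of_injective {ι : Type*} [Fintype ι] (hZ : Measurable Z)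
    {v : ι → E} (hv : Function.Injective v) (hs : ∑ i, μ (Z ⁻¹' {v i}) = 1) (g : E → ℝ) :
    ∫ ω, g (Z ω) ∂μ = ∑ i, μ.real (Z ⁻¹' {v i}) * g (v i) := by
  classical
  rw [integral_comp_eq_sum_of_sum_measure_preimage_eq_one hZ (univ.image v)
    (by rwa [sum_image hv.injOn]) g, sum_image hv.injOn]

end FiniteRange

section CosineSimilarity

variable {m n : Type*} [Fintype m] [Fintype n]

theorem Matrix.dotProduct_mulVec_mulVec_of_transpose_mul_self [DecidableEq n] {R : Type*}
    [CommSemiring R] {W : Matrix m n R} (hW : Wᵀ * W = 1) (u v : n → R) :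
    W *ᵥ u ⬝ᵥ W *ᵥ v = u ⬝ᵥ v := by
  rw [Matrix.dotProduct_mulVec, Matrix.vecMul_mulVec, hW, Matrix.vecMul_one]

theorem sum_sq_eq_dotProduct_self (u : n → ℝ) : ∑ q, u q ^ 2 = u ⬝ᵥ u := by
  simp [dotProduct, sq]

noncomputable def cosineSim (u v : n → ℝ) : ℝ :=
  u ⬝ᵥ v / (√(∑ q, u q ^ 2) * √(∑ q, v q ^ 2))

theorem cosineSim_mulVec_of_transpose_mul_self [DecidableEq n] {W : Matrix m n ℝ}
    (hW : Wᵀ * W = 1) (u v : n → ℝ) :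
    cosineSim (W *ᵥ u) (W *ᵥ v) = cosineSim u v := by
  simp only [cosineSim, sum_sq_eq_dotProduct_self,
    Matrix.dotProduct_mulVec_mulVec_of_transpose_mul_self hW]

end CosineSimilarity

section FeatureVec

variable {D : ℕ} {y : ℝ}

def featureVec (y : ℝ) (ε : Fin D → Bool) : Fin (D + 1) → ℝ :=
  Fin.cons y fun i => if ε i then y else -y

theorem featureVec_injective (hy : y ≠ 0) : Function.Injective (featureVec (D := D) y) := by
  intro ε δ h
  funext i
  have hi : (if ε i then y else -y) = if δ i then y else -y := by
    simpa [featureVec] using congrFun h i.succ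
  revert hi
  cases ε i <;> cases δ i <;> simp <;> intro hi <;> exact hy (by linarith)

theorem featureVec_dotProduct (hy : y * y = 1) (ε δ : Fin D → Bool) :
    featureVec y ε ⬝ᵥ featureVec y δ = 1 + ∑ i, spin (ε i) * spin (δ i) := by
  simp only [dotProduct, featureVec, Fin.sum_univ_succ, Fin.cons_zero, Fin.cons_succ, hy]
  congr 1
  refine sum_congr rfl fun i _ => ?_
  cases ε i <;> cases δ i <;> simp [spin, hy]

theorem cosineSim_featureVec (hy : y * y = 1) (ε δ : Fin D → Bool) :
    cosineSim (featureVec y ε) (featureVec y δ)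
      = (1 + ∑ i, spin (ε i) * spin (δ i)) / (D + 1) := by
  have hnorm : ∀ ε : Fin D → Bool, ∑ q, featureVec y ε q ^ 2 = D + 1 := fun ε => by
    simp [sum_sq_eq_dotProduct_self, featureVec_dotProduct hy, spin_mul_self, add_comm]
  rw [cosineSim, hnorm, hnorm, Real.mul_self_sqrt (by positivity), featureVec_dotProduct hy]

end FeatureVec

theorem stmt_19_general
    {Ω : Type*} [MeasurableSpace Ω] (μ : MeasureTheory.Measure Ω)
    [MeasureTheory.IsProbabilityMeasure μ]
    (D Q : ℕ)
    (pb : ℝ) (hpb : 1 / 2 ≤ pb) (hpb1 : pb ≤ 1)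
    (y : ℝ) (hy : y = 1 ∨ y = -1)
    -- `W` is semi-orthogonal: `Wᵀ W = I`
    (W : Matrix (Fin Q) (Fin (D + 1)) ℝ) (hW : W.transpose * W = 1)
    (Xi Xj : Ω → (Fin (D + 1) → ℝ))
    (hXi : Measurable Xi) (hXj : Measurable Xj)
    -- joint law: `Xi` and `Xj` independent, each with spurious coordinates i.i.d.
    -- equal to `y` with probability `pb`.
    (hlaw : ∀ (ε δ : Fin D → Bool),
      μ {ω | Xi ω = Fin.cons y (fun i => if ε i then y else -y) ∧
             Xj ω = Fin.cons y (fun i => if δ i then y else -y)} =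
        ENNReal.ofReal ((∏ i, (if ε i then pb else 1 - pb)) *
          (∏ i, (if δ i then pb else 1 - pb)))) :
    ∫ ω, (dotProduct (W.mulVec (Xi ω)) (W.mulVec (Xj ω))) /
        (Real.sqrt (∑ q, (W.mulVec (Xi ω)) q ^ 2) *
         Real.sqrt (∑ q, (W.mulVec (Xj ω)) q ^ 2)) ∂μ
      = (1 + (D : ℝ) * (2 * pb - 1) ^ 2) / ((D : ℝ) + 1) := by
  have hy2 : y * y = 1 := by rcases hy with rfl | rfl <;> norm_num
  set w : (Fin D → Bool) → ℝ := fun ε => ∏ j, bernoulliMass pb (ε j)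
  have hw : ∀ ε, 0 ≤ w ε := fun ε =>
    prod_nonneg fun j _ => bernoulliMass_nonneg (by linarith) hpb1 _
  have hinj := featureVec_injective (D := D) (left_ne_zero_of_mul_eq_one hy2)
  have hfiber : ∀ σ, μ ((fun ω => (Xi ω, Xj ω)) ⁻¹' {Prod.map (featureVec y) (featureVec y) σ}) =
      ENNReal.ofReal (w σ.1 * w σ.2) := fun σ => by
    convert hlaw σ.1 σ.2 using 2
    · ext ω
      simp [featureVec, Prod.ext_iff]
    · rfl
  refine (integral_comp_eq_sum_of_injective (hXi.prodMk hXj) (hinj.prodMap hinj) ?_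
    fun e => cosineSim (W *ᵥ e.1) (W *ᵥ e.2)).trans ?_
  · simp_rw [hfiber]
    rw [← ENNReal.ofReal_sum_of_nonneg fun σ _ => mul_nonneg (hw _) (hw _), Fintype.sum_prod_type,
      ← Finset.sum_mul_sum, sum_prod_apply_eq_one (sum_bernoulliMass pb), one_mul,
      ENNReal.ofReal_one]
  · simp_rw [measureReal_def, hfiber, ENNReal.toReal_ofReal (mul_nonneg (hw _) (hw _)),
      cosineSim_mulVec_of_transpose_mul_self hW, Prod.map, cosineSim_featureVec hy2,
      Fintype.sum_prod_type, ← mul_div_assoc, ← Finset.sum_div]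
    rw [sum_sum_bernoulliMass_mul_one_add_sum_spin_mul_spin, Fintype.card_fin]

/-- **Lemma 1, within-environment alignment.** `Xi` and `Xj` are
independent random `{-1,1}`-vectors, both with spurious-feature parameter `p^b` and
the same label `y`. Then the expected cosine similarity of the embeddings `W·Xi` and
`W·Xj` equals `(1 + D·(2p^b - 1)²)/(D+1)`. -/
theorem stmt_19
    {Ω : Type*} [MeasurableSpace Ω] (μ : MeasureTheory.Measure Ω)
    [MeasureTheory.IsProbabilityMeasure μ]
    (D Q : ℕ) (hD : 0 < D) (hQ : D + 1 ≤ Q)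
    (pb : ℝ) (hpb : 1 / 2 ≤ pb) (hpb1 : pb ≤ 1)
    (y : ℝ) (hy : y = 1 ∨ y = -1)
    -- `W` is semi-orthogonal: `Wᵀ W = I`
    (W : Matrix (Fin Q) (Fin (D + 1)) ℝ) (hW : W.transpose * W = 1)
    (Xi Xj : Ω → (Fin (D + 1) → ℝ))
    (hXi : Measurable Xi) (hXj : Measurable Xj)
    -- joint law: `Xi` and `Xj` independent, each with spurious coordinates i.i.d.
    -- equal to `y` with probability `pb`.
    (hlaw : ∀ (ε δ : Fin D → Bool),
      μ {ω | Xi ω = Fin.cons y (fun i => if ε i then y else -y) ∧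
             Xj ω = Fin.cons y (fun i => if δ i then y else -y)} =
        ENNReal.ofReal ((∏ i, (if ε i then pb else 1 - pb)) *
          (∏ i, (if δ i then pb else 1 - pb)))) :
    ∫ ω, (dotProduct (W.mulVec (Xi ω)) (W.mulVec (Xj ω))) /
        (Real.sqrt (∑ q, (W.mulVec (Xi ω)) q ^ 2) *
         Real.sqrt (∑ q, (W.mulVec (Xj ω)) q ^ 2)) ∂μ
      = (1 + (D : ℝ) * (2 * pb - 1) ^ 2) / ((D : ℝ) + 1) :=
  stmt_19_general μ D Q pb hpb hpb1 y hy W hW Xi Xj hXi hXj hlaw
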